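/- The radius sequence (r_k) generated by the BP-MAP algorithm converges to r̄, the optimal value of the basis pursuit problem. -/

import Mathlib

open Filter Topology

noncomputable def norm1 {n : ℕ} (x : EuclideanSpace ℝ (Fin n)) : ℝ := ∑ i, |x i|

lemma norm1_nonneg {n : ℕ} (x : EuclideanSpace ℝ (Fin n)) : 0 ≤ norm1 x :=
  Finset.sum_nonneg fun i _ => abs_nonneg _

lemma norm1_eq_zero {n : ℕ} {x : EuclideanSpace ℝ (Fin n)} (h : norm1 x = 0) : x = 0 := by
  have := (Finset.sum_eq_zero_iff_of_nonneg (fun i _ => abs_nonneg (x i))).1 h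
  ext i
  simpa [abs_eq_zero] using this i (Finset.mem_univ i)

lemma norm1_smul {n : ℕ} (c : ℝ) (x : EuclideanSpace ℝ (Fin n)) :
    norm1 (c • x) = |c| * norm1 x := by
  simp [norm1, Finset.mul_sum, abs_mul]

lemma norm_le_norm1 {n : ℕ} (x : EuclideanSpace ℝ (Fin n)) : ‖x‖ ≤ norm1 x := by
  rw [EuclideanSpace.norm_eq]
  have h1 : ∑ i, ‖x i‖ ^ 2 ≤ (∑ i, ‖x i‖) ^ 2 :=
    Finset.sum_sq_le_sq_sum_of_nonneg (fun i _ => norm_nonneg _)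
  calc Real.sqrt (∑ i, ‖x i‖ ^ 2) ≤ Real.sqrt ((∑ i, ‖x i‖) ^ 2) := Real.sqrt_le_sqrt h1
    _ = ∑ i, ‖x i‖ := Real.sqrt_sq (Finset.sum_nonneg fun i _ => norm_nonneg _)
    _ = norm1 x := by simp [norm1, Real.norm_eq_abs]

lemma norm1_continuous {n : ℕ} : Continuous (fun x : EuclideanSpace ℝ (Fin n) => norm1 x) := by
  unfold norm1
  exact continuous_finset_sum _ fun i _ => ((continuous_apply i).comp (PiLp.continuous_ofLp _ _)).abs

/-- The radius sequence (r_k) generated by BP-MAP converges to r̄. -/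
theorem bpmap_radii_tendsto {n m : ℕ} (hn : 1 ≤ n)
    (A : Matrix (Fin m) (Fin n) ℝ) (b : Fin m → ℝ)
    (M : Set (EuclideanSpace ℝ (Fin n)))
    (hM : M = {x | A.mulVec (WithLp.ofLp x) = b})
    (hMne : M.Nonempty)
    (rbar : ℝ) (hrbar : rbar = sInf (norm1 '' M))
    (r : ℕ → ℝ) (z x : ℕ → EuclideanSpace ℝ (Fin n))
    (hr0 : r 0 = 0) (hz0 : z 0 = 0)
    (hxM : ∀ k, x k ∈ M)
    (hzB : ∀ k, norm1 (z k) ≤ r k)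
    (hbap : ∀ k, ∀ y ∈ M, ∀ w : EuclideanSpace ℝ (Fin n),
      norm1 w ≤ r k → dist (z k) (x k) ≤ dist w y)
    (hrrec : ∀ k, r (k + 1) = r k + dist (z k) (x k)) :
    Tendsto r atTop (𝓝 rbar) := by
  -- M is closed
  have hMclosed : IsClosed M := by
    rw [hM]
    have hc : Continuous (fun v : EuclideanSpace ℝ (Fin n) => A.mulVec (WithLp.ofLp v)) := by
      refine continuous_pi fun i => ?_
      simp only [Matrix.mulVec, dotProduct]
      exact continuous_finset_sum _ fun j _ => (continuous_const.mul ((continuous_apply j).comp (PiLp.continuous_ofLp _ _)))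
    exact isClosed_eq hc continuous_const
  -- minimizer of norm1 on M
  obtain ⟨x0, hx0⟩ := hMne
  have hKcomp : IsCompact (M ∩ Metric.closedBall 0 (norm1 x0)) :=
    (isCompact_closedBall (0 : EuclideanSpace ℝ (Fin n)) (norm1 x0)).inter_left hMclosed
  have hKne : (M ∩ Metric.closedBall 0 (norm1 x0)).Nonempty :=
    ⟨x0, hx0, by simpa [Metric.mem_closedBall] using norm_le_norm1 x0⟩
  obtain ⟨xs, hxsK, hxsmin⟩ := hKcomp.exists_isMinOn hKne (norm1_continuous.continuousOn)
  have hxsM : xs ∈ M := hxsK.1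
  have hmin : ∀ y ∈ M, norm1 xs ≤ norm1 y := by
    intro y hy
    by_cases hyK : y ∈ Metric.closedBall (0 : EuclideanSpace ℝ (Fin n)) (norm1 x0)
    · exact hxsmin ⟨hy, hyK⟩
    · have : norm1 x0 < ‖y‖ := by simpa [Metric.mem_closedBall, dist_eq_norm] using hyK
      have h2 : norm1 xs ≤ norm1 x0 := hxsmin ⟨hx0, by simpa [Metric.mem_closedBall, dist_eq_norm] using norm_le_norm1 x0⟩
      linarith [norm_le_norm1 y]
  have hbdd0 : BddBelow (norm1 '' M) := ⟨0, by rintro _ ⟨y, -, rfl⟩; exact norm1_nonneg y⟩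
  have hrbar_eq : rbar = norm1 xs := by
    rw [hrbar]
    apply le_antisymm
    · exact csInf_le hbdd0 ⟨xs, hxsM, rfl⟩
    · exact le_csInf ⟨norm1 x0, ⟨x0, hx0, rfl⟩⟩ (by rintro _ ⟨y, hy, rfl⟩; exact hmin y hy)
  have hrbar_nonneg : 0 ≤ rbar := hrbar_eq ▸ norm1_nonneg xs
  -- r monotone nonneg, bounded by rbar
  have hmono : Monotone r := monotone_nat_of_le_succ fun k => by
    rw [hrrec k]; linarith [dist_nonneg (x := z k) (y := x k)]
  have hrnn : ∀ k, 0 ≤ r k := fun k => hr0 ▸ hmono (Nat.zero_le k)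
  have hstep : ∀ k, r k ≤ rbar → dist (z k) (x k) ≤ rbar - r k := by
    intro k hk
    by_cases hr : rbar = 0
    · have hrk0 : r k = 0 := le_antisymm (hr ▸ hk) (hrnn k)
      have hxs0 : xs = 0 := norm1_eq_zero (by rw [← hrbar_eq, hr])
      have := hbap k xs hxsM 0 (by simpa [norm1] using hrk0.ge)
      simpa [hxs0, hrk0, hr] using this
    · have hrpos : 0 < rbar := lt_of_le_of_ne hrbar_nonneg (Ne.symm hr)
      set t : ℝ := r k / rbar with ht
      have ht0 : 0 ≤ t := div_nonneg (hrnn k) hrbar_nonneg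
      have ht1 : t ≤ 1 := (div_le_one hrpos).2 hk
      have hw : norm1 (t • xs) ≤ r k := by
        rw [norm1_smul, abs_of_nonneg ht0, ← hrbar_eq, ht, div_mul_cancel₀ _ hr]
      have := hbap k xs hxsM (t • xs) hw
      refine this.trans ?_
      have : dist (t • xs) xs = (1 - t) * ‖xs‖ := by
        rw [dist_eq_norm]
        have : t • xs - xs = -((1 - t) • xs) := by
          rw [sub_smul, one_smul, neg_sub]
        rw [this, norm_neg, norm_smul, Real.norm_eq_abs, abs_of_nonneg (by linarith)]
      rw [this]
      have h3 : (1 - t) * ‖xs‖ ≤ (1 - t) * norm1 xs :=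
        mul_le_mul_of_nonneg_left (norm_le_norm1 xs) (by linarith)
      have h4 : (1 - t) * norm1 xs = rbar - r k := by
        rw [← hrbar_eq, sub_mul, one_mul, ht, div_mul_cancel₀ _ hr]
      linarith
  have hrle : ∀ k, r k ≤ rbar := by
    intro k
    induction k with
    | zero => rw [hr0]; exact hrbar_nonneg
    | succ k ih =>
      rw [hrrec k]
      have := hstep k ih
      linarith
  -- convergence to supremum L
  have hbddA : BddAbove (Set.range r) := ⟨rbar, by rintro _ ⟨k, rfl⟩; exact hrle k⟩
  set L : ℝ := ⨆ k, r k with hL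
  have htend : Tendsto r atTop (𝓝 L) := tendsto_atTop_ciSup hmono hbddA
  have hLle : L ≤ rbar := ciSup_le hrle
  have hrkL : ∀ k, r k ≤ L := fun k => le_ciSup hbddA k
  -- d_k → 0
  have hd0 : Tendsto (fun k => dist (z k) (x k)) atTop (𝓝 0) := by
    have h1 : Tendsto (fun k => r (k + 1) - r k) atTop (𝓝 (L - L)) :=
      ((htend.comp (tendsto_add_atTop_nat 1)).sub htend)
    rw [sub_self] at h1
    refine h1.congr fun k => ?_
    rw [hrrec k]; ring
  -- L = rbar
  have hLeq : L = rbar := by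
    by_contra hne
    have hLlt : L < rbar := lt_of_le_of_ne hLle hne
    set K : Set (EuclideanSpace ℝ (Fin n)) := {w | norm1 w ≤ L} with hK
    have hKcl : IsClosed K := isClosed_le norm1_continuous continuous_const
    have hKb : Bornology.IsBounded K := by
      refine (Metric.isBounded_closedBall (x := (0:EuclideanSpace ℝ (Fin n))) (r := L)).subset ?_
      intro w hw
      simp only [Metric.mem_closedBall, dist_zero_right]
      exact (norm_le_norm1 w).trans hw
    have hKcomp : IsCompact K := Metric.isCompact_of_isClosed_isBounded hKcl hKb
    have hL0 : (0:ℝ) ≤ L := hr0 ▸ hrkL 0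
    have hKne : K.Nonempty := ⟨0, by simp only [hK, Set.mem_setOf_eq, norm1]; simpa using hL0⟩
    have hcont : ContinuousOn (fun w => Metric.infDist w M) K :=
      (Metric.continuous_infDist_pt M).continuousOn
    obtain ⟨w0, hw0K, hw0min⟩ := hKcomp.exists_isMinOn hKne hcont
    have hw0notM : w0 ∉ M := by
      intro hmem
      have h1 : rbar ≤ norm1 w0 := hrbar_eq ▸ hmin w0 hmem
      exact absurd (h1.trans hw0K) (not_le.2 hLlt)
    have hpos : 0 < Metric.infDist w0 M :=
      (hMclosed.notMem_iff_infDist_pos ⟨x0, hx0⟩).1 hw0notM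
    have hge : ∀ k, Metric.infDist w0 M ≤ dist (z k) (x k) := by
      intro k
      have hz : z k ∈ K := Set.mem_setOf.2 ((hzB k).trans (hrkL k))
      calc Metric.infDist w0 M ≤ Metric.infDist (z k) M := hw0min hz
        _ ≤ dist (z k) (x k) := Metric.infDist_le_dist_of_mem (hxM k)
    have : Metric.infDist w0 M ≤ 0 :=
      le_of_tendsto_of_tendsto tendsto_const_nhds hd0 (Eventually.of_forall hge)
    linarith
  rwa [hLeq] at htend
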